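/- Let R = k[x, y, a, b]/(bx, xy, ax − by, x² − y²), bigraded by deg x = deg y = (1,0) and deg a = deg b = (0,1). Then the elements a^i b^j (i, j ≥ 0), x a^i (i ≥ 0), y a^i (i ≥ 0), and x² form a k-vector-space basis of R. -/

import Mathlib

/-!
Spanning: the span of the family contains `1` and, by the defining relations, is stable under
multiplication by each of `x, y, a, b`; since these generate `R` as a `k`-algebra, the span is
all of `R`.

Independence: reducing monomials with `y b → x a`, `y² → x²` and `bx, xy → 0` gives a normal
form, either a standard monomial or `0`. Extended linearly this is a map
`k[x,y,a,b] → k^(basis index)` that kills the ideal, because for every monomial `m` it takes the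
same value on `m u` and `m v` for each generator `u - v` of the ideal, and vanishes on `m u` for
each monomial generator `u`. It sends the standard monomials to distinct standard basis vectors.
-/

open MvPolynomial

noncomputable section

variable (k : Type) [Field k]

/-- The defining ideal `(bx, xy, ax − by, x² − y²)` of `R`, where
`x = X 0`, `y = X 1`, `a = X 2`, `b = X 3` in `k[x,y,a,b]`. -/
def rIdeal : Ideal (MvPolynomial (Fin 4) k) :=
  Ideal.span {X 3 * X 0, X 0 * X 1, X 2 * X 0 - X 3 * X 1, X 0 ^ 2 - X 1 ^ 2}

/-- The ring `R = k[x,y,a,b]/(bx, xy, ax − by, x² − y²)`. -/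
def Rring := MvPolynomial (Fin 4) k ⧸ rIdeal k

instance : CommRing (Rring k) := by unfold Rring; infer_instance
instance : Algebra k (Rring k) := by unfold Rring; infer_instance

/-- The claimed basis of `R`: the monomials `aⁱbʲ`, `xaⁱ`, `yaⁱ` and `x²`. -/
def basisFamily : (ℕ × ℕ) ⊕ ℕ ⊕ ℕ ⊕ Unit → Rring k
  | Sum.inl (i, j) => Ideal.Quotient.mk (rIdeal k) (X 2 ^ i * X 3 ^ j)
  | Sum.inr (Sum.inl i) => Ideal.Quotient.mk (rIdeal k) (X 0 * X 2 ^ i)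
  | Sum.inr (Sum.inr (Sum.inl i)) => Ideal.Quotient.mk (rIdeal k) (X 1 * X 2 ^ i)
  | Sum.inr (Sum.inr (Sum.inr _)) => Ideal.Quotient.mk (rIdeal k) (X 0 ^ 2)

theorem Submodule.span_eq_top_of_mul_mem {R A : Type*} [CommSemiring R] [Semiring A]
    [Algebra R A] {s t : Set A} (hs : Algebra.adjoin R s = ⊤) (h1 : 1 ∈ span R t)
    (ht : ∀ v ∈ t, ∀ g ∈ s, v * g ∈ span R t) : span R t = ⊤ := by
  have hmul (g : A) (hg : g ∈ s) : ∀ m ∈ span R t, m * g ∈ span R t := fun _ hm =>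
    (span_le (p := (span R t).comap (LinearMap.mulRight R g)) |>.2 fun v hv => ht v hv g hg) hm
  have key : ∀ a ∈ Algebra.adjoin R s, ∀ m ∈ span R t, m * a ∈ span R t := by
    intro a ha
    induction ha using Algebra.adjoin_induction with
    | mem g hg => exact hmul g hg
    | algebraMap r =>
      intro m hm
      rw [← Algebra.commutes, ← Algebra.smul_def]
      exact smul_mem _ r hm
    | add a b _ _ ha hb =>
      intro m hm
      rw [mul_add]
      exact add_mem (ha m hm) (hb m hm)
    | mul a b _ _ ha hb =>
      intro m hm
      rw [← mul_assoc]
      exact hb _ (ha m hm)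
  exact eq_top_iff.2 fun a _ => by simpa using key a (hs ▸ Algebra.mem_top) 1 h1

theorem MvPolynomial.adjoin_range_comp_X_eq_top {σ R A : Type*} [CommSemiring R] [Semiring A]
    [Algebra R A] {f : MvPolynomial σ R →ₐ[R] A} (hf : Function.Surjective f) :
    Algebra.adjoin R (Set.range (f ∘ X)) = ⊤ := by
  rw [Set.range_comp, Algebra.adjoin_image, adjoin_range_X, Algebra.map_top, AlgHom.range_eq_top]
  exact hf

theorem LinearIndependent.comp_of_factorsThrough {R M N V ι : Type*} [Semiring R]
    [AddCommMonoid M] [AddCommMonoid N] [AddCommMonoid V] [Module R M] [Module R N] [Module R V]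
    {v : ι → M} {f : M →ₗ[R] N} {L : M →ₗ[R] V} (hv : LinearIndependent R (L ∘ v))
    (h : Function.FactorsThrough L f) : LinearIndependent R (f ∘ v) := fun l₁ l₂ hl => by
  rw [← Finsupp.apply_linearCombination, ← Finsupp.apply_linearCombination] at hl
  apply hv
  rw [← Finsupp.apply_linearCombination, ← Finsupp.apply_linearCombination, h hl]

section MonomialLift

variable {σ R V : Type*} [CommRing R] [AddCommGroup V] [Module R V]

def MvPolynomial.monomialLift (N : (σ →₀ ℕ) → V) : MvPolynomial σ R →ₗ[R] V :=
  (basisMonomials σ R).constr R N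

theorem MvPolynomial.monomialLift_monomial (N : (σ →₀ ℕ) → V) (m : σ →₀ ℕ) (c : R) :
    monomialLift N (monomial m c) = c • N m := by
  have h : monomial m c = c • basisMonomials σ R m := by
    rw [coe_basisMonomials, smul_monomial, smul_eq_mul, mul_one]
  rw [h, map_smul, monomialLift, Module.Basis.constr_basis]

theorem MvPolynomial.monomialLift_eq_zero_of_mem_span {N : (σ →₀ ℕ) → V}
    {s : Set (MvPolynomial σ R)} (hs : ∀ g ∈ s, ∀ m, monomialLift N (monomial m 1 * g) = 0)
    {p : MvPolynomial σ R} (hp : p ∈ Ideal.span s) : monomialLift (R := R) N p = 0 := by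
  suffices ∀ f, monomialLift N (f * p) = 0 by simpa using this 1
  induction hp using Submodule.span_induction with
  | mem g hg =>
    intro f
    induction f using MvPolynomial.induction_on' with
    | monomial m c =>
      rw [show monomial m c * g = c • (monomial m 1 * g) by
        rw [← smul_mul_assoc, smul_monomial, smul_eq_mul, mul_one], map_smul, hs g hg m, smul_zero]
    | add f₁ f₂ h₁ h₂ => rw [add_mul, map_add, h₁, h₂, add_zero]
  | zero => simp
  | add p q _ _ hp hq => intro f; rw [mul_add, map_add, hp, hq, add_zero]
  | smul r p _ hp => intro f; rw [smul_eq_mul, mul_left_comm, ← mul_assoc]; exact hp _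

end MonomialLift

namespace Rring

def mk : MvPolynomial (Fin 4) k →ₐ[k] Rring k := Ideal.Quotient.mkₐ k (rIdeal k)

theorem mk_surjective : Function.Surjective (mk k) := Ideal.Quotient.mkₐ_surjective k _

theorem mk_eq_zero_iff {p : MvPolynomial (Fin 4) k} : mk k p = 0 ↔ p ∈ rIdeal k :=
  Ideal.Quotient.eq_zero_iff_mem

theorem mk_eq_mk_iff {p q : MvPolynomial (Fin 4) k} : mk k p = mk k q ↔ p - q ∈ rIdeal k :=
  Ideal.Quotient.mk_eq_mk_iff_sub_mem p q

abbrev x : Rring k := mk k (X 0)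
abbrev y : Rring k := mk k (X 1)
abbrev a : Rring k := mk k (X 2)
abbrev b : Rring k := mk k (X 3)

theorem b_mul_x : b k * x k = 0 := by
  rw [← map_mul, mk_eq_zero_iff]
  exact Ideal.subset_span (by simp)

theorem x_mul_y : x k * y k = 0 := by
  rw [← map_mul, mk_eq_zero_iff]
  exact Ideal.subset_span (by simp)

theorem a_mul_x : a k * x k = b k * y k := by
  rw [← map_mul, ← map_mul, mk_eq_mk_iff]
  exact Ideal.subset_span (by simp)

theorem x_sq : x k ^ 2 = y k ^ 2 := by
  rw [← map_pow, ← map_pow, mk_eq_mk_iff]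
  exact Ideal.subset_span (by simp)

end Rring

open Rring

def basisMonomial : (ℕ × ℕ) ⊕ ℕ ⊕ ℕ ⊕ Unit → MvPolynomial (Fin 4) k
  | .inl (i, j) => X 2 ^ i * X 3 ^ j
  | .inr (.inl i) => X 0 * X 2 ^ i
  | .inr (.inr (.inl i)) => X 1 * X 2 ^ i
  | .inr (.inr (.inr _)) => X 0 ^ 2

theorem basisFamily_eq_mk_comp : basisFamily k = mk k ∘ basisMonomial k := by
  funext e
  rcases e with ⟨i, j⟩ | i | i | _ <;> rfl

theorem basisFamily_inl (i j : ℕ) : basisFamily k (.inl (i, j)) = a k ^ i * b k ^ j := by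
  simp [basisFamily_eq_mk_comp, basisMonomial]

theorem basisFamily_x (i : ℕ) : basisFamily k (.inr (.inl i)) = x k * a k ^ i := by
  simp [basisFamily_eq_mk_comp, basisMonomial]

theorem basisFamily_y (i : ℕ) : basisFamily k (.inr (.inr (.inl i))) = y k * a k ^ i := by
  simp [basisFamily_eq_mk_comp, basisMonomial]

theorem basisFamily_x_sq (u : Unit) : basisFamily k (.inr (.inr (.inr u))) = x k ^ 2 := by
  simp [basisFamily_eq_mk_comp, basisMonomial]

abbrev basisSpan : Submodule k (Rring k) := Submodule.span k (Set.range (basisFamily k))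

theorem mem_basisSpan_of_eq {z : Rring k} (e : (ℕ × ℕ) ⊕ ℕ ⊕ ℕ ⊕ Unit)
    (h : z = basisFamily k e) : z ∈ basisSpan k :=
  h ▸ Submodule.subset_span ⟨e, rfl⟩

theorem mem_basisSpan_of_eq_zero {z : Rring k} (h : z = 0) : z ∈ basisSpan k :=
  h ▸ Submodule.zero_mem _

theorem basisFamily_mul_x_mem_basisSpan (e : (ℕ × ℕ) ⊕ ℕ ⊕ ℕ ⊕ Unit) :
    basisFamily k e * x k ∈ basisSpan k := by
  rcases e with ⟨i, _ | j⟩ | (_ | i) | i | _ <;>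
    simp only [basisFamily_inl, basisFamily_x, basisFamily_y, basisFamily_x_sq]
  · exact mem_basisSpan_of_eq k (.inr (.inl i)) (by rw [basisFamily_x]; ring)
  · exact mem_basisSpan_of_eq_zero k (by linear_combination a k ^ i * b k ^ j * b_mul_x k)
  · exact mem_basisSpan_of_eq k (.inr (.inr (.inr ()))) (by rw [basisFamily_x_sq]; ring)
  · exact mem_basisSpan_of_eq_zero k
      (by linear_combination a k ^ i * x k * a_mul_x k + a k ^ i * y k * b_mul_x k)
  · exact mem_basisSpan_of_eq_zero k (by linear_combination a k ^ i * x_mul_y k)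
  · exact mem_basisSpan_of_eq_zero k (by linear_combination x k * x_sq k + y k * x_mul_y k)

theorem basisFamily_mul_y_mem_basisSpan (e : (ℕ × ℕ) ⊕ ℕ ⊕ ℕ ⊕ Unit) :
    basisFamily k e * y k ∈ basisSpan k := by
  rcases e with ⟨i, _ | _ | j⟩ | i | (_ | i) | _ <;>
    simp only [basisFamily_inl, basisFamily_x, basisFamily_y, basisFamily_x_sq]
  · exact mem_basisSpan_of_eq k (.inr (.inr (.inl i))) (by rw [basisFamily_y]; ring)
  · exact mem_basisSpan_of_eq k (.inr (.inl (i + 1)))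
      (by rw [basisFamily_x]; linear_combination -a k ^ i * a_mul_x k)
  · exact mem_basisSpan_of_eq_zero k (by
      linear_combination a k ^ (i + 1) * b k ^ j * b_mul_x k - a k ^ i * b k ^ (j + 1) * a_mul_x k)
  · exact mem_basisSpan_of_eq_zero k (by linear_combination a k ^ i * x_mul_y k)
  · exact mem_basisSpan_of_eq k (.inr (.inr (.inr ())))
      (by rw [basisFamily_x_sq]; linear_combination -x_sq k)
  · exact mem_basisSpan_of_eq_zero k (by
      linear_combination
        a k ^ i * x k * a_mul_x k + a k ^ i * y k * b_mul_x k - a k ^ (i + 1) * x_sq k)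
  · exact mem_basisSpan_of_eq_zero k (by linear_combination x k * x_mul_y k)

theorem basisFamily_mul_a_mem_basisSpan (e : (ℕ × ℕ) ⊕ ℕ ⊕ ℕ ⊕ Unit) :
    basisFamily k e * a k ∈ basisSpan k := by
  rcases e with ⟨i, j⟩ | i | i | _ <;>
    simp only [basisFamily_inl, basisFamily_x, basisFamily_y, basisFamily_x_sq]
  · exact mem_basisSpan_of_eq k (.inl (i + 1, j)) (by rw [basisFamily_inl]; ring)
  · exact mem_basisSpan_of_eq k (.inr (.inl (i + 1))) (by rw [basisFamily_x]; ring)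
  · exact mem_basisSpan_of_eq k (.inr (.inr (.inl (i + 1)))) (by rw [basisFamily_y]; ring)
  · exact mem_basisSpan_of_eq_zero k (by linear_combination x k * a_mul_x k + y k * b_mul_x k)

theorem basisFamily_mul_b_mem_basisSpan (e : (ℕ × ℕ) ⊕ ℕ ⊕ ℕ ⊕ Unit) :
    basisFamily k e * b k ∈ basisSpan k := by
  rcases e with ⟨i, j⟩ | i | i | _ <;>
    simp only [basisFamily_inl, basisFamily_x, basisFamily_y, basisFamily_x_sq]
  · exact mem_basisSpan_of_eq k (.inl (i, j + 1)) (by rw [basisFamily_inl]; ring)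
  · exact mem_basisSpan_of_eq_zero k (by linear_combination a k ^ i * b_mul_x k)
  · exact mem_basisSpan_of_eq k (.inr (.inl (i + 1)))
      (by rw [basisFamily_x]; linear_combination -a k ^ i * a_mul_x k)
  · exact mem_basisSpan_of_eq_zero k (by linear_combination x k * b_mul_x k)

theorem span_basisFamily : Submodule.span k (Set.range (basisFamily k)) = ⊤ := by
  refine Submodule.span_eq_top_of_mul_mem (adjoin_range_comp_X_eq_top (mk_surjective k))
    (mem_basisSpan_of_eq k (.inl (0, 0)) (by simp [basisFamily_inl])) ?_
  rintro _ ⟨e, rfl⟩ _ ⟨n, rfl⟩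
  fin_cases n
  exacts [basisFamily_mul_x_mem_basisSpan k e, basisFamily_mul_y_mem_basisSpan k e,
    basisFamily_mul_a_mem_basisSpan k e, basisFamily_mul_b_mem_basisSpan k e]

/-- The standard monomial to which `x^p y^q a^i b^j` reduces modulo `rIdeal`, or `none` if it
reduces to `0`. -/
def normalForm (p q i j : ℕ) : Option ((ℕ × ℕ) ⊕ ℕ ⊕ ℕ ⊕ Unit) :=
  if p = 0 ∧ q = 0 then some (.inl (i, j))
  else if p = 1 ∧ q = 0 ∧ j = 0 then some (.inr (.inl i))
  else if p = 0 ∧ q = 1 ∧ j = 0 then some (.inr (.inr (.inl i)))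
  else if p = 0 ∧ q = 1 ∧ j = 1 then some (.inr (.inl (i + 1)))
  else if (p = 2 ∧ q = 0 ∨ p = 0 ∧ q = 2) ∧ i = 0 ∧ j = 0 then some (.inr (.inr (.inr ())))
  else none

theorem normalForm_bx (p q i j : ℕ) : normalForm (p + 1) q i (j + 1) = none := by
  simp [normalForm]

theorem normalForm_xy (p q i j : ℕ) : normalForm (p + 1) (q + 1) i j = none := by
  simp [normalForm]

theorem normalForm_ax_by (p q i j : ℕ) :
    normalForm (p + 1) q (i + 1) j = normalForm p (q + 1) i (j + 1) := by
  simp only [normalForm]; split_ifs <;> simp_all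

theorem normalForm_x2_y2 (p q i j : ℕ) :
    normalForm (p + 2) q i j = normalForm p (q + 2) i j := by
  simp only [normalForm]; split_ifs <;> simp_all

def normalFormMap : MvPolynomial (Fin 4) k →ₗ[k] ((ℕ × ℕ) ⊕ ℕ ⊕ ℕ ⊕ Unit →₀ k) :=
  monomialLift fun m => (normalForm (m 0) (m 1) (m 2) (m 3)).elim 0 (Finsupp.single · 1)

theorem normalFormMap_monomial (m : Fin 4 →₀ ℕ) :
    normalFormMap k (monomial m 1) =
      (normalForm (m 0) (m 1) (m 2) (m 3)).elim 0 (Finsupp.single · 1) := by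
  rw [normalFormMap, monomialLift_monomial, one_smul]

theorem normalFormMap_eq_zero_of_mem {p : MvPolynomial (Fin 4) k} (hp : p ∈ rIdeal k) :
    normalFormMap k p = 0 := by
  refine monomialLift_eq_zero_of_mem_span ?_ hp
  have hXX (i j : Fin 4) : (X i * X j : MvPolynomial (Fin 4) k) =
      monomial (Finsupp.single i 1 + Finsupp.single j 1) 1 := by
    rw [X, X, monomial_mul, mul_one]
  intro g hg m
  change normalFormMap k (monomial m 1 * g) = 0
  rcases hg with rfl | rfl | rfl | rfl <;>
    simp [hXX, X_pow_eq_monomial, mul_sub, monomial_mul, normalFormMap_monomial, normalForm_bx,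
      normalForm_xy, normalForm_ax_by, normalForm_x2_y2]

theorem normalFormMap_basisMonomial (e : (ℕ × ℕ) ⊕ ℕ ⊕ ℕ ⊕ Unit) :
    normalFormMap k (basisMonomial k e) = Finsupp.single e 1 := by
  rcases e with ⟨i, j⟩ | i | i | _ <;>
    simp [basisMonomial, X, monomial_pow, monomial_mul, normalFormMap_monomial, normalForm]

theorem linearIndependent_basisFamily : LinearIndependent k (basisFamily k) := by
  have hv : ⇑(normalFormMap k) ∘ basisMonomial k = fun e => Finsupp.single e 1 :=
    funext (normalFormMap_basisMonomial k)
  rw [basisFamily_eq_mk_comp]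
  refine LinearIndependent.comp_of_factorsThrough (f := (mk k).toLinearMap)
    (L := normalFormMap k) ?_ fun p q hpq => ?_
  · rw [hv]
    exact Finsupp.linearIndependent_single_one k _
  · rw [← sub_eq_zero, ← map_sub]
    exact normalFormMap_eq_zero_of_mem k ((mk_eq_mk_iff k).1 hpq)

/-- In `R = k[x,y,a,b]/(bx, xy, ax − by, x² − y²)`, the elements `aⁱbʲ` (`i, j ≥ 0`),
`xaⁱ` (`i ≥ 0`), `yaⁱ` (`i ≥ 0`) and `x²` form a `k`-vector-space basis of `R`. -/
theorem basisFamily_is_basis :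
    LinearIndependent k (basisFamily k) ∧
    Submodule.span k (Set.range (basisFamily k)) = ⊤ :=
  ⟨linearIndependent_basisFamily k, span_basisFamily k⟩

end
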